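/- arXiv:2410.20326 — 4 statements merged into one kernel-verified Lean document; each statement's English description precedes it below -/
import Mathlib

section
/- Let b : ℝⁿ → ℝ be a one-hidden-layer ReLU network, let D := {x : b(x) ≥ 0}, and write ∂D for the topological frontier of D; assume ∂D is connected. Let 𝒮 be a collection of activation sets S ⊆ {1,…,M} such that (a) there exists S₀ ∈ 𝒮 with X̄(S₀) ∩ ∂D ≠ ∅, and (b) 𝒮 is closed under boundary adjacency: whenever S ∈ 𝒮 and S' ⊆ {1,…,M} satisfies X̄(S) ∩ X̄(S') ∩ ∂D ≠ ∅, then S' ∈ 𝒮. Then ∂D ⊆ ⋃_{S ∈ 𝒮} X̄(S). -/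
open scoped RealInnerProductSpace

/-- A one-hidden-layer ReLU network with input weights `W`, biases `r`,
output weights `Ω` and output bias `ψ`. -/
noncomputable def reluNet {n M : ℕ} (W : Fin M → EuclideanSpace ℝ (Fin n))
    (r Ω : Fin M → ℝ) (ψ : ℝ) (x : EuclideanSpace ℝ (Fin n)) : ℝ :=
  ψ + ∑ j, Ω j * max 0 (⟪W j, x⟫ + r j)

/-- The activation region `X̄(S)` of a one-hidden-layer ReLU network. -/
def actRegion {n M : ℕ} (W : Fin M → EuclideanSpace ℝ (Fin n)) (r : Fin M → ℝ)
    (S : Set (Fin M)) : Set (EuclideanSpace ℝ (Fin n)) :=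
  {x | (∀ j ∈ S, 0 ≤ ⟪W j, x⟫ + r j) ∧ (∀ j ∉ S, ⟪W j, x⟫ + r j ≤ 0)}

/-!
The regions indexed by `𝒮` and those indexed by its complement form two closed sets covering
`∂D`, and closedness under adjacency says that they do not meet on `∂D`. Since `∂D` is
connected and meets the first one, it lies inside it.
-/

section ClosedCover

variable {X ι : Type*} [TopologicalSpace X] {C : ι → Set X}

theorem LocallyFinite.isClosed_biUnion (hC : LocallyFinite C) (hcl : ∀ i, IsClosed (C i))
    (s : Set ι) : IsClosed (⋃ i ∈ s, C i) := by
  rw [Set.biUnion_eq_iUnion]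
  exact (hC.comp_injective Subtype.val_injective).isClosed_iUnion fun i => hcl i

theorem IsPreconnected.subset_biUnion_of_forall_inter_nonempty_mem {F : Set X}
    (hF : IsPreconnected F) (hC : LocallyFinite C) (hcl : ∀ i, IsClosed (C i))
    (hcov : F ⊆ ⋃ i, C i) {s : Set ι} (hinit : ∃ i ∈ s, (C i ∩ F).Nonempty)
    (hadj : ∀ i ∈ s, ∀ j, (C i ∩ C j ∩ F).Nonempty → j ∈ s) :
    F ⊆ ⋃ i ∈ s, C i := by
  have hcov' : F ⊆ (⋃ i ∈ s, C i) ∪ ⋃ i ∈ sᶜ, C i := by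
    intro x hx
    obtain ⟨i, hi⟩ := Set.mem_iUnion.1 (hcov hx)
    by_cases his : i ∈ s
    · exact Or.inl (Set.mem_biUnion his hi)
    · exact Or.inr (Set.mem_biUnion his hi)
  have hdisj : F ∩ ((⋃ i ∈ s, C i) ∩ ⋃ i ∈ sᶜ, C i) = ∅ := by
    refine Set.eq_empty_of_forall_notMem fun x ⟨hxF, hxs, hxsc⟩ => ?_
    obtain ⟨i, hi, hxi⟩ := Set.mem_iUnion₂.1 hxs
    obtain ⟨j, hj, hxj⟩ := Set.mem_iUnion₂.1 hxsc
    exact hj (hadj i hi j ⟨x, ⟨hxi, hxj⟩, hxF⟩)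
  obtain ⟨i, hi, y, hyi, hyF⟩ := hinit
  refine (isPreconnected_iff_subset_of_disjoint_closed.1 hF _ _ (hC.isClosed_biUnion hcl s)
    (hC.isClosed_biUnion hcl sᶜ) hcov' hdisj).resolve_right fun hFsc => ?_
  exact (Set.eq_empty_iff_forall_notMem.1 hdisj) y ⟨hyF, Set.mem_biUnion hi hyi, hFsc hyF⟩

end ClosedCover

section ActivationRegions

variable {n M : ℕ} (W : Fin M → EuclideanSpace ℝ (Fin n)) (r : Fin M → ℝ)

theorem isClosed_actRegion (S : Set (Fin M)) : IsClosed (actRegion W r S) := by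
  have hcont : ∀ j, Continuous fun x : EuclideanSpace ℝ (Fin n) => ⟪W j, x⟫ + r j :=
    fun j => by fun_prop
  simp only [actRegion, Set.ofPred_and, Set.ofPred_forall]
  exact .inter
    (isClosed_iInter fun j => isClosed_iInter fun _ => isClosed_le continuous_const (hcont j))
    (isClosed_iInter fun j => isClosed_iInter fun _ => isClosed_le (hcont j) continuous_const)

def activationPattern (x : EuclideanSpace ℝ (Fin n)) : Set (Fin M) :=
  {j | 0 ≤ ⟪W j, x⟫ + r j}

theorem mem_actRegion_activationPattern (x : EuclideanSpace ℝ (Fin n)) :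
    x ∈ actRegion W r (activationPattern W r x) :=
  ⟨fun _ hj => hj, fun _ hj => le_of_not_ge hj⟩

end ActivationRegions

/-- First claim of Proposition 2: a collection `𝒮` of activation sets that contains
some set whose region meets the (connected) boundary `∂D` of `D = {x : b(x) ≥ 0}`,
and that is closed under adjacency along `∂D`, covers all of `∂D`. -/
theorem boundary_subset_enumerated_regions {n M : ℕ}
    (W : Fin M → EuclideanSpace ℝ (Fin n)) (r Ω : Fin M → ℝ) (ψ : ℝ)
    (𝒮 : Set (Set (Fin M)))
    (hconn : IsConnected (frontier {x | 0 ≤ reluNet W r Ω ψ x}))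
    (hinit : ∃ S₀ ∈ 𝒮,
      (actRegion W r S₀ ∩ frontier {x | 0 ≤ reluNet W r Ω ψ x}).Nonempty)
    (hadj : ∀ S ∈ 𝒮, ∀ S' : Set (Fin M),
      (actRegion W r S ∩ actRegion W r S' ∩
        frontier {x | 0 ≤ reluNet W r Ω ψ x}).Nonempty → S' ∈ 𝒮) :
    frontier {x | 0 ≤ reluNet W r Ω ψ x} ⊆ ⋃ S ∈ 𝒮, actRegion W r S :=
  hconn.isPreconnected.subset_biUnion_of_forall_inter_nonempty_mem
    (locallyFinite_of_finite _) (isClosed_actRegion W r)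
    (fun x _ => Set.mem_iUnion.2 ⟨_, mem_actRegion_activationPattern W r x⟩) hinit hadj
end

section
/- Let b : ℝⁿ → ℝ be a one-hidden-layer ReLU network, let h : ℝⁿ → ℝ be any function, and define D := {x : b(x) ≥ 0}. Suppose that for every activation set S ⊆ {1,…,M} and every x ∈ X̄(S) with b(x) = 0 one has h(x) ≥ 0. Then the frontier of D is contained in {x : h(x) ≥ 0}. -/
/-!
A boundary point of `D = {x | 0 ≤ b x}` is a zero of `b`, because `b` is continuous; and every point
lies in the activation region of its own activation pattern, so the verifier's hypothesis applies to it.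
-/

open scoped RealInnerProductSpace

section

variable {n M : ℕ} (W : Fin M → EuclideanSpace ℝ (Fin n)) (r : Fin M → ℝ)

theorem continuous_reluNet (Ω : Fin M → ℝ) (ψ : ℝ) : Continuous (reluNet W r Ω ψ) := by
  unfold reluNet
  fun_prop

theorem mem_actRegion_activeSet (x : EuclideanSpace ℝ (Fin n)) :
    x ∈ actRegion W r {j | 0 ≤ ⟪W j, x⟫ + r j} :=
  ⟨fun _ hj => hj, fun _ hj => le_of_not_ge hj⟩

end

/-- Soundness of the correctness verifier: if on every activation region the
function `h` is nonnegative at every zero of the ReLU network `b`, then the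
frontier of `D = {x : b(x) ≥ 0}` lies in the safe set `{x : h(x) ≥ 0}`. -/
theorem correctness_verifier_sound {n M : ℕ}
    (W : Fin M → EuclideanSpace ℝ (Fin n)) (r Ω : Fin M → ℝ) (ψ : ℝ)
    (h : EuclideanSpace ℝ (Fin n) → ℝ)
    (hver : ∀ S : Set (Fin M), ∀ x ∈ actRegion W r S,
      reluNet W r Ω ψ x = 0 → 0 ≤ h x) :
    frontier {x | 0 ≤ reluNet W r Ω ψ x} ⊆ {x | 0 ≤ h x} := by
  intro x hx
  have hzero : 0 = reluNet W r Ω ψ x :=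
    frontier_le_subset_eq continuous_const (continuous_reluNet W r Ω ψ) hx
  exact hver _ x (mem_actRegion_activeSet W r x) hzero.symm
end

section
/- Let α : ℝ → ℝ be strictly increasing with α(0) = 0, and let h : ℝ → ℝ be differentiable with h(0) ≥ 0 and h'(t) ≥ −α(h(t)) for all t ≥ 0. Then h(t) ≥ 0 for all t ≥ 0. -/
/-! Wherever `h(t) < 0`, strict monotonicity gives `h'(t) ≥ -α(h(t)) > -α(0) = 0`, so `h` cannot
cross any level `-ε < 0` downwards; letting `ε → 0` gives `h ≥ 0`. -/

open Set

theorem image_nonneg_of_deriv_pos_of_neg {f f' : ℝ → ℝ} {a b : ℝ}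
    (hf : ContinuousOn f (Icc a b)) (hf' : ∀ x ∈ Ico a b, HasDerivWithinAt f (f' x) (Ici x) x)
    (ha : 0 ≤ f a) (hneg : ∀ x ∈ Ico a b, f x < 0 → 0 < f' x) :
    ∀ ⦃x⦄, x ∈ Icc a b → 0 ≤ f x := by
  intro x hx
  refine le_of_forall_pos_le_add fun ε hε => ?_
  have hbound : -f x ≤ ε :=
    image_le_of_deriv_right_lt_deriv_boundary' (B := fun _ => ε) (B' := 0) hf.neg
      (fun y hy => (hf' y hy).neg) (by simp only [Pi.neg_apply]; linarith) continuousOn_const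
      (fun _ _ => hasDerivWithinAt_const _ _ ε)
      (fun y hy hfy => neg_lt_zero.mpr <|
        hneg y hy (by simp only [Pi.neg_apply] at hfy; linarith)) hx
  linarith

/-- Scalar comparison principle behind the CBF condition: if `α` is strictly
increasing with `α(0) = 0`, `h` is differentiable, `h(0) ≥ 0`, and
`h'(t) ≥ −α(h(t))` for all `t ≥ 0`, then `h(t) ≥ 0` for all `t ≥ 0`. -/
theorem cbf_comparison (α : ℝ → ℝ) (hα : StrictMono α) (hα0 : α 0 = 0)
    (h : ℝ → ℝ) (hdiff : Differentiable ℝ h) (h0 : 0 ≤ h 0)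
    (hineq : ∀ t ≥ (0 : ℝ), -α (h t) ≤ deriv h t) :
    ∀ t ≥ (0 : ℝ), 0 ≤ h t := by
  intro t ht
  refine image_nonneg_of_deriv_pos_of_neg hdiff.continuous.continuousOn
    (fun x _ => (hdiff x).hasDerivAt.hasDerivWithinAt) h0 (fun x hx hhx => ?_) ⟨ht, le_rfl⟩
  have hαx : α (h x) < 0 := hα0 ▸ hα hhx
  linarith [hineq x hx.1]
end

section
/- Let D ⊆ ℝⁿ be a closed set and F : ℝⁿ → ℝⁿ a locally Lipschitz vector field such that for every x in the frontier of D, F(x) lies in the positive tangent cone to D at x (the Bouligand tangent cone: the set of limits v = lim c_k·d_k where c_k → ∞, d_k → 0, and x + d_k ∈ D). Then D is positively invariant: every differentiable curve γ : ℝ → ℝⁿ satisfying γ'(t) = F(γ(t)) for all t and γ(0) ∈ D satisfies γ(t) ∈ D for all t ≥ 0. -/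
open Filter Metric Set Asymptotics
open scoped Topology NNReal

/-- A nearest point of a closed set to a point not in the interior lies on the frontier. -/
lemma nagumo_exists_frontier_dist_eq {E : Type*} [NormedAddCommGroup E] [NormedSpace ℝ E]
    [ProperSpace E] {D : Set E} (hD : IsClosed D) (hne : D.Nonempty)
    {x : E} (hx : x ∉ interior D) :
    ∃ y ∈ frontier D, dist x y = infDist x D := by
  by_cases hxD : x ∈ D
  · exact ⟨x, by rw [hD.frontier_eq]; exact ⟨hxD, hx⟩,
      by simp [infDist_zero_of_mem hxD]⟩
  · obtain ⟨y, hyD, hyd⟩ := hD.exists_infDist_eq_dist hne x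
    have hpos : 0 < infDist x D := (hD.notMem_iff_infDist_pos hne).mp hxD
    refine ⟨y, ?_, hyd.symm⟩
    rw [hD.frontier_eq]
    refine ⟨hyD, fun hyint => ?_⟩
    -- points on the open segment from y to x are outside D and converge to y,
    -- contradicting y ∈ interior D
    have hxy : dist x y ≠ 0 := by rw [← hyd]; exact ne_of_gt hpos
    set p : ℕ → E := fun k => y + ((k : ℝ) + 2)⁻¹ • (x - y) with hp
    have hlt : ∀ k : ℕ, dist x (p k) < infDist x D := by
      intro k
      have h1 : (0:ℝ) < ((k : ℝ) + 2)⁻¹ := by positivity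
      have h2 : ((k : ℝ) + 2)⁻¹ < 1 := by
        have hk : (0:ℝ) ≤ (k:ℝ) := Nat.cast_nonneg k
        rw [inv_lt_one_iff₀]; right; linarith
      have : dist x (p k) = (1 - ((k : ℝ) + 2)⁻¹) * dist x y := by
        rw [dist_eq_norm, dist_eq_norm]
        have : x - p k = (1 - ((k : ℝ) + 2)⁻¹) • (x - y) := by
          simp only [hp]; module
        rw [this, norm_smul, Real.norm_eq_abs, abs_of_pos (by linarith)]
      rw [this, hyd]
      have hdpos : 0 < dist x y := lt_of_le_of_ne dist_nonneg (Ne.symm hxy)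
      nlinarith
    have hnotD : ∀ k : ℕ, p k ∉ D := fun k hk =>
      absurd (infDist_le_dist_of_mem hk) (not_le.mpr (hlt k))
    have htend : Filter.Tendsto p atTop (𝓝 y) := by
      have : Filter.Tendsto (fun k : ℕ => ((k : ℝ) + 2)⁻¹ • (x - y)) atTop (𝓝 (0 : E)) := by
        have h0 : Filter.Tendsto (fun k : ℕ => ((k : ℝ) + 2)⁻¹) atTop (𝓝 (0:ℝ)) := by
          apply tendsto_inv_atTop_zero.comp
          exact tendsto_atTop_add_const_right _ _ tendsto_natCast_atTop_atTop
        simpa using h0.smul_const (x - y)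
      simpa using tendsto_const_nhds.add this
    have hycl : y ∈ closure Dᶜ :=
      mem_closure_of_tendsto htend (Filter.Eventually.of_forall hnotD)
    have : y ∈ interior D := hyint
    rw [closure_compl] at hycl
    exact (mem_compl_iff _ _).mp hycl this

/-- Sequential description of the positive tangent cone with scalars tending to infinity. -/
lemma nagumo_posTangent_seq {E : Type*} [NormedAddCommGroup E] [NormedSpace ℝ E] (D : Set E) (y v : E)
  (h : v ∈ posTangentConeAt D y) : ∃ (c : ℕ → ℝ) (d : ℕ → E), (∀ᶠ n in atTop, y + d n ∈ D) ∧
          Filter.Tendsto c atTop atTop ∧ Filter.Tendsto (fun n => c n • d n) atTop (𝓝 v) := by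
  obtain ⟨c₀, d, hd0, hds, hcd⟩ := mem_tangentConeAt_iff_exists_seq.mp h
  set a : ℕ → ℝ := fun n => ‖d n‖ + ((n : ℝ) + 1)⁻¹ with ha
  have hapos : ∀ n, 0 < a n := fun n => by positivity
  have hat : Tendsto a atTop (𝓝 0) := by
    have h1 : Tendsto (fun n : ℕ => ((n : ℝ) + 1)⁻¹) atTop (𝓝 0) :=
      tendsto_inv_atTop_zero.comp (tendsto_atTop_add_const_right _ _ tendsto_natCast_atTop_atTop)
    simpa using hd0.norm.add h1
  have hs0 : Tendsto (fun n => Real.sqrt (a n)) atTop (𝓝 0) := by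
    have := (Real.continuous_sqrt.tendsto 0).comp hat
    rw [Real.sqrt_zero] at this
    exact this
  have hsq : Tendsto (fun n => Real.sqrt (a n)) atTop (𝓝[>] 0) := by
    apply tendsto_nhdsWithin_of_tendsto_nhds_of_eventually_within
    · exact hs0
    · exact Eventually.of_forall fun n => Real.sqrt_pos.mpr (hapos n)
  have hm : Tendsto (fun n => (Real.sqrt (a n))⁻¹) atTop atTop :=
    tendsto_inv_nhdsGT_zero.comp hsq
  refine ⟨fun n => (c₀ n : ℝ) + (Real.sqrt (a n))⁻¹, d, hds, ?_, ?_⟩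
  · exact tendsto_atTop_mono (fun n => le_add_of_nonneg_left (c₀ n).2) hm
  · have hmd : Tendsto (fun n => (Real.sqrt (a n))⁻¹ • d n) atTop (𝓝 0) := by
      rw [tendsto_zero_iff_norm_tendsto_zero]
      refine squeeze_zero (fun n => norm_nonneg _) (fun n => ?_)
        hs0
      · have hs : 0 < Real.sqrt (a n) := Real.sqrt_pos.mpr (hapos n)
        have hle : ‖d n‖ ≤ a n := by
          have : (0:ℝ) ≤ ((n:ℝ)+1)⁻¹ := by positivity
          simp only [ha]; linarith
        rw [norm_smul, Real.norm_eq_abs, abs_of_pos (inv_pos.mpr hs), inv_mul_le_iff₀ hs]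
        calc ‖d n‖ ≤ a n := hle
        _ = Real.sqrt (a n) * Real.sqrt (a n) := (Real.mul_self_sqrt (hapos n).le).symm
    have := hcd.add hmd
    simp only [add_zero] at this
    refine this.congr fun n => ?_
    rw [add_smul, NNReal.smul_def]

/-- Local version of Nagumo's theorem: starting in `D`, the solution stays in `D`
for a short time to the right. -/
lemma nagumo_local {E : Type*} [NormedAddCommGroup E] [NormedSpace ℝ E] [ProperSpace E]
    {D : Set E} (hD : IsClosed D) {F : E → E} (hF : LocallyLipschitz F)
    (htan : ∀ x ∈ frontier D, F x ∈ posTangentConeAt D x)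
    {γ : ℝ → E} (hγ : ∀ t, HasDerivAt γ (F (γ t)) t)
    {t₀ : ℝ} (ht₀ : γ t₀ ∈ D) :
    ∃ b > t₀, ∀ s ∈ Icc t₀ b, γ s ∈ D := by
  classical
  obtain ⟨K, U, hU, hKF⟩ := hF (γ t₀)
  obtain ⟨r, hr, hballU⟩ := Metric.mem_nhds_iff.mp hU
  have hlip : LipschitzOnWith K F (ball (γ t₀) r) := hKF.mono hballU
  have hcont : Continuous γ := continuous_iff_continuousAt.mpr fun t => (hγ t).continuousAt
  have hDne : D.Nonempty := ⟨γ t₀, ht₀⟩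
  set g : ℝ → ℝ := fun s => infDist (γ s) D with hg
  have hgcont : Continuous g := (continuous_infDist_pt D).comp hcont
  -- choose an interval on which γ stays in a small ball
  have hball4 : ∀ᶠ s in 𝓝 t₀, γ s ∈ ball (γ t₀) (r / 4) :=
    hcont.continuousAt (ball_mem_nhds _ (by positivity))
  obtain ⟨ε, hε, hεball⟩ := Metric.eventually_nhds_iff.mp hball4
  set b : ℝ := t₀ + ε / 2 with hb
  have hbt : t₀ < b := by simp [hb]; linarith
  have hmem : ∀ s ∈ Icc t₀ b, γ s ∈ ball (γ t₀) (r / 4) := by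
    intro s hs
    apply hεball
    rw [Real.dist_eq, abs_sub_lt_iff]
    constructor <;> [skip; skip] <;>
      · have := hs.1; have := hs.2; simp [hb] at *; linarith
  refine ⟨b, hbt, fun s hs => ?_⟩
  -- the liminf slope estimate
  have hf' : ∀ x ∈ Ico t₀ b, ∀ ρ : ℝ, (K : ℝ) * g x < ρ →
      ∃ᶠ z in 𝓝[>] x, (z - x)⁻¹ * (g z - g x) < ρ := by
    intro x hx ρ hρ
    have hxball : γ x ∈ ball (γ t₀) (r / 4) := hmem x ⟨hx.1, le_of_lt hx.2⟩
    by_cases hint : γ x ∈ interior D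
    · have h0 : g x = 0 := infDist_zero_of_mem (interior_subset hint)
      have hρ0 : 0 < ρ := by rw [h0, mul_zero] at hρ; exact hρ
      have hev : ∀ᶠ z in 𝓝 x, γ z ∈ D :=
        hcont.continuousAt (mem_interior_iff_mem_nhds.mp hint)
      refine ((hev.filter_mono nhdsWithin_le_nhds).mono fun z hz => ?_).frequently
      have : g z = 0 := infDist_zero_of_mem hz
      rw [this, h0]; simpa using hρ0
    · obtain ⟨y, hyf, hyd⟩ := nagumo_exists_frontier_dist_eq hD hDne hint
      have hgx : g x = dist (γ x) y := hyd.symm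
      have hgxlt : g x < r / 4 := by
        calc g x ≤ dist (γ x) (γ t₀) := infDist_le_dist_of_mem ht₀
        _ < r / 4 := mem_ball.mp hxball
      have hyball : y ∈ ball (γ t₀) r := by
        rw [mem_ball]
        calc dist y (γ t₀) ≤ dist y (γ x) + dist (γ x) (γ t₀) := dist_triangle _ _ _
        _ < r / 4 + r / 4 := by
            rw [dist_comm, ← hgx]
            exact add_lt_add hgxlt (mem_ball.mp hxball)
        _ ≤ r := by linarith
      obtain ⟨c, d, hdmem, hc, hcd⟩ := nagumo_posTangent_seq D y (F y) (htan y hyf)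
      have hc0 : ∀ᶠ n in atTop, 0 < c n := hc.eventually_gt_atTop 0
      have hcinv : Filter.Tendsto (fun n => (c n)⁻¹) atTop (𝓝 0) :=
        tendsto_inv_atTop_zero.comp hc
      set z : ℕ → ℝ := fun n => x + (c n)⁻¹ with hzdef
      have hztend : Filter.Tendsto z atTop (𝓝[>] x) := by
        apply tendsto_nhdsWithin_of_tendsto_nhds_of_eventually_within
        · simpa using tendsto_const_nhds.add hcinv
        · filter_upwards [hc0] with n hn
          simp only [hzdef, mem_Ioi]
          have : 0 < (c n)⁻¹ := inv_pos.mpr hn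
          linarith
      -- the little-o term
      have hder := hasDerivAt_iff_isLittleO.mp (hγ x)
      have hN : Filter.Tendsto
          (fun w => ‖γ w - γ x - (w - x) • F (γ x)‖ / (w - x)) (𝓝 x) (𝓝 0) :=
        hder.norm_left.tendsto_div_nhds_zero
      have hNz : Filter.Tendsto (fun n => c n * ‖γ (z n) - γ x - (z n - x) • F (γ x)‖)
          atTop (𝓝 0) := by
        have hcomp := hN.comp (hztend.mono_right nhdsWithin_le_nhds)
        apply hcomp.congr
        intro n
        simp only [Function.comp, hzdef, add_sub_cancel_left]
        rw [div_eq_mul_inv, inv_inv, mul_comm]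
      -- the tangent-cone approximation term
      have hT3 : Filter.Tendsto (fun n => ‖F y - c n • d n‖) atTop (𝓝 0) := by
        have := (tendsto_const_nhds (x := F y) (f := atTop)).sub hcd
        simpa using this.norm
      -- Lipschitz bound
      have hFK : ‖F (γ x) - F y‖ ≤ (K : ℝ) * g x := by
        rw [← dist_eq_norm, hgx]
        exact hlip.dist_le_mul _ (ball_subset_ball (by linarith) hxball) _ hyball
      set RHS : ℕ → ℝ := fun n =>
        c n * ‖γ (z n) - γ x - (z n - x) • F (γ x)‖ + ‖F (γ x) - F y‖ + ‖F y - c n • d n‖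
        with hRHS
      have hRHStend : Filter.Tendsto RHS atTop (𝓝 (0 + ‖F (γ x) - F y‖ + 0)) :=
        (hNz.add tendsto_const_nhds).add hT3
      have hlim : (0:ℝ) + ‖F (γ x) - F y‖ + 0 < ρ := by
        rw [zero_add, add_zero]
        exact lt_of_le_of_lt hFK hρ
      have hevRHS : ∀ᶠ n in atTop, RHS n < ρ := hRHStend.eventually_lt_const hlim
      have hevbound : ∀ᶠ n in atTop, (z n - x)⁻¹ * (g (z n) - g x) ≤ RHS n := by
        filter_upwards [hc0, hdmem] with n hcn hdn
        have hcne : c n ≠ 0 := ne_of_gt hcn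
        have hinv : 0 < (c n)⁻¹ := inv_pos.mpr hcn
        have hzx : z n - x = (c n)⁻¹ := by simp [hzdef]
        have hgle : g (z n) ≤ dist (γ (z n)) (y + d n) := infDist_le_dist_of_mem hdn
        have hdist : dist (γ (z n)) (y + d n) ≤
            ‖γ (z n) - γ x - (z n - x) • F (γ x)‖ + (c n)⁻¹ * ‖F (γ x) - F y‖ +
              ‖(c n)⁻¹ • F y - d n‖ + dist (γ x) y := by
          rw [dist_eq_norm, dist_eq_norm]
          have hsplit : γ (z n) - (y + d n) =
              (γ (z n) - γ x - (z n - x) • F (γ x)) + ((c n)⁻¹ • (F (γ x) - F y)) +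
                ((c n)⁻¹ • F y - d n) + (γ x - y) := by
            rw [hzx]; module
          rw [hsplit]
          calc ‖_ + _ + _ + (γ x - y)‖ ≤ ‖_ + _ + _‖ + ‖γ x - y‖ := norm_add_le _ _
          _ ≤ ‖_ + _‖ + ‖(c n)⁻¹ • F y - d n‖ + ‖γ x - y‖ := by
              gcongr; exact norm_add_le _ _
          _ ≤ ‖γ (z n) - γ x - (z n - x) • F (γ x)‖ + ‖(c n)⁻¹ • (F (γ x) - F y)‖ +
                ‖(c n)⁻¹ • F y - d n‖ + ‖γ x - y‖ := by gcongr; exact norm_add_le _ _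
          _ = _ := by rw [norm_smul, Real.norm_eq_abs, abs_of_pos hinv]
        have hlast : c n * ‖(c n)⁻¹ • F y - d n‖ = ‖F y - c n • d n‖ := by
          rw [show ‖F y - c n • d n‖ = ‖c n • ((c n)⁻¹ • F y - d n)‖ by
            rw [smul_sub, smul_smul, mul_inv_cancel₀ hcne, one_smul]]
          rw [norm_smul, Real.norm_eq_abs, abs_of_pos hcn]
        have step : g (z n) - g x ≤ ‖γ (z n) - γ x - (z n - x) • F (γ x)‖ +
            (c n)⁻¹ * ‖F (γ x) - F y‖ + ‖(c n)⁻¹ • F y - d n‖ := by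
          have := hgle.trans hdist
          rw [hgx]; rw [dist_eq_norm] at this ⊢
          linarith
        rw [hzx, inv_inv]
        calc c n * (g (z n) - g x) ≤ c n * (‖γ (z n) - γ x - (z n - x) • F (γ x)‖ +
              (c n)⁻¹ * ‖F (γ x) - F y‖ + ‖(c n)⁻¹ • F y - d n‖) :=
              mul_le_mul_of_nonneg_left step (le_of_lt hcn)
        _ = RHS n := by
            rw [hRHS]
            simp only [mul_add]
            rw [← mul_assoc, mul_inv_cancel₀ hcne, one_mul, hlast]
      have hevP : ∀ᶠ n in atTop, (z n - x)⁻¹ * (g (z n) - g x) < ρ := by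
        filter_upwards [hevRHS, hevbound] with n h1 h2
        exact lt_of_le_of_lt h2 h1
      exact hztend.frequently hevP.frequently
  -- Grönwall
  have hbound : ∀ x ∈ Ico t₀ b, (K : ℝ) * g x ≤ (K : ℝ) * g x + 0 := fun x _ => by
    simp
  have hga : g t₀ ≤ 0 := le_of_eq (infDist_zero_of_mem ht₀)
  have key := le_gronwallBound_of_liminf_deriv_right_le (f := g)
    (f' := fun s => (K : ℝ) * g s) (δ := 0) (K := (K : ℝ)) (ε := 0)
    hgcont.continuousOn hf' hga hbound s hs
  rw [gronwallBound_ε0_δ0] at key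
  have : g s = 0 := le_antisymm key infDist_nonneg
  exact (hD.mem_iff_infDist_zero hDne).mpr this

/-- Nagumo's theorem: a closed set `D` is positively invariant for the flow of a
locally Lipschitz vector field `F` whose value at every frontier point of `D`
lies in the Bouligand (positive) tangent cone to `D` at that point. -/
theorem nagumo {n : ℕ}
    (D : Set (EuclideanSpace ℝ (Fin n))) (hD : IsClosed D)
    (F : EuclideanSpace ℝ (Fin n) → EuclideanSpace ℝ (Fin n))
    (hF : LocallyLipschitz F)
    (htan : ∀ x ∈ frontier D, F x ∈ posTangentConeAt D x) :
    ∀ γ : ℝ → EuclideanSpace ℝ (Fin n),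
      (∀ t : ℝ, HasDerivAt γ (F (γ t)) t) → γ 0 ∈ D → ∀ t ≥ (0 : ℝ), γ t ∈ D := by
  intro γ hγ h0 t ht
  have hcont : Continuous γ := continuous_iff_continuousAt.mpr fun s => (hγ s).continuousAt
  set S : Set ℝ := γ ⁻¹' D with hS
  have hSclosed : IsClosed S := hD.preimage hcont
  have : Icc (0:ℝ) t ⊆ S := by
    apply IsClosed.Icc_subset_of_forall_mem_nhdsWithin
      (hSclosed.inter isClosed_Icc) h0
    rintro x ⟨hxS, -⟩
    obtain ⟨b, hbx, hloc⟩ := nagumo_local hD hF htan hγ hxS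
    exact mem_of_superset (Ioc_mem_nhdsGT_of_mem ⟨le_refl x, hbx⟩)
      fun w hw => hloc w ⟨le_of_lt hw.1, hw.2⟩
  exact this ⟨ht, le_refl t⟩
end
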